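/- arXiv:1906.06851 — 4 statements merged into one kernel-verified Lean document; each statement's English description precedes it below -/
import Mathlib

section
/- Let T be a positive integer and let x : {1,...,T} → ℝ≥0 satisfy ∑_{t=1}^{T} x(t) = 1. Define X(t) = ∑_{ℓ=1}^{t} x(ℓ). Suppose C is a positive integer such that x(t) = 0 for every t > C (i.e., the job is fully scheduled by the end of time slot C). Then C ≥ 1 + ∑_{τ=1}^{T-1} (1 − X(τ)). -/
/-! Each term `1 - X τ` is at most `1` because `X τ ≥ 0`, and it vanishes once `τ ≥ C` because
the job is then complete; so only the at most `C - 1` slots `τ < C` contribute to the sum. -/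

open Finset

theorem sum_Icc_one_eq_of_forall_lt_eq_zero {M : Type*} [AddCommMonoid M] {f : ℕ → M}
    {C τ T : ℕ} (hf : ∀ t, C < t → f t = 0) (hCτ : C ≤ τ) (hτT : τ ≤ T) :
    ∑ t ∈ Icc 1 τ, f t = ∑ t ∈ Icc 1 T, f t :=
  sum_subset (Icc_subset_Icc_right hτT) fun t ht htτ ↦
    hf t (by simp only [mem_Icc, not_and, not_le] at ht htτ; omega)

theorem sum_one_sub_le_card_filter_lt {g : ℕ → ℝ} {s : Finset ℕ} {C : ℕ}
    (hnonneg : ∀ τ ∈ s, τ < C → 0 ≤ g τ) (hone : ∀ τ ∈ s, C ≤ τ → g τ = 1) :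
    ∑ τ ∈ s, (1 - g τ) ≤ #{τ ∈ s | τ < C} := by
  rw [natCast_card_filter]
  refine sum_le_sum fun τ hτ ↦ ?_
  split_ifs with hτC
  · linarith [hnonneg τ hτ hτC]
  · linarith [hone τ hτ (not_lt.mp hτC)]

theorem card_filter_Icc_one_lt_le (n C : ℕ) : #{τ ∈ Icc 1 n | τ < C} ≤ C - 1 := by
  calc #{τ ∈ Icc 1 n | τ < C} ≤ #(Ico 1 C) :=
        card_le_card fun τ hτ ↦ by simp only [mem_filter, mem_Icc, mem_Ico] at hτ ⊢; omega
    _ = C - 1 := Nat.card_Ico 1 C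

theorem completion_time_lower_bound_general
    (T : ℕ) (x : ℕ → ℝ)
    (hx : ∀ t ∈ Finset.Icc 1 T, 0 ≤ x t)
    (hsum : ∑ t ∈ Finset.Icc 1 T, x t = 1)
    (X : ℕ → ℝ) (hX : ∀ t, X t = ∑ ℓ ∈ Finset.Icc 1 t, x ℓ)
    (C : ℕ) (hCpos : 0 < C)
    (hC : ∀ t, C < t → x t = 0) :
    (C : ℝ) ≥ 1 + ∑ τ ∈ Finset.Icc 1 (T - 1), (1 - X τ) := by
  have hτT : ∀ τ ∈ Icc 1 (T - 1), τ ≤ T := fun τ hτ ↦ by grind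
  have hXnonneg : ∀ τ ∈ Icc 1 (T - 1), τ < C → 0 ≤ X τ := fun τ hτ _ ↦
    hX τ ▸ sum_nonneg fun t ht ↦ hx t (Icc_subset_Icc_right (hτT τ hτ) ht)
  have hXone : ∀ τ ∈ Icc 1 (T - 1), C ≤ τ → X τ = 1 := fun τ hτ hCτ ↦ by
    rw [hX, sum_Icc_one_eq_of_forall_lt_eq_zero hC hCτ (hτT τ hτ), hsum]
  have hcard : (#{τ ∈ Icc 1 (T - 1) | τ < C} : ℝ) ≤ C - 1 := by
    rw [← Nat.cast_pred hCpos]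
    exact_mod_cast card_filter_Icc_one_lt_le (T - 1) C
  linarith [sum_one_sub_le_card_filter_lt hXnonneg hXone]

/-- Proposition 3.1: if a job with nonnegative fractional schedule `x` on slots
`1, ..., T` (summing to `1`, cumulative `X`) is fully scheduled by the end of
time slot `C`, then `C ≥ 1 + ∑_{τ=1}^{T-1} (1 - X τ)`. -/
theorem completion_time_lower_bound
    (T : ℕ) (hT : 0 < T) (x : ℕ → ℝ)
    (hx : ∀ t ∈ Finset.Icc 1 T, 0 ≤ x t)
    (hsum : ∑ t ∈ Finset.Icc 1 T, x t = 1)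
    (X : ℕ → ℝ) (hX : ∀ t, X t = ∑ ℓ ∈ Finset.Icc 1 t, x ℓ)
    (C : ℕ) (hCpos : 0 < C)
    (hC : ∀ t, C < t → x t = 0) :
    (C : ℝ) ≥ 1 + ∑ τ ∈ Finset.Icc 1 (T - 1), (1 - X τ) :=
  completion_time_lower_bound_general T x hx hsum X hX C hCpos hC
end

section
/- Let T be a positive integer, let x : {1,...,T} → ℝ≥0 satisfy ∑_{t=1}^{T} x(t) = 1, and define X(t) = ∑_{ℓ=1}^{t} x(ℓ) (so X(0)=0, X(T)=1). Let X̃ : [0,T] → [0,1] be the piecewise-linear interpolation of X, and for λ ∈ (0,1] define C(λ) = inf { τ ∈ [0,T] : X̃(τ) ≥ λ }. Then ∫_{0}^{1} 2λ·⌈C(λ)/λ⌉ dλ ≤ 2·(1 + ∑_{t=1}^{T-1} (1 − X(t))). -/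
open Finset MeasureTheory intervalIntegral

lemma aux_sum_Icc (f : ℕ → ℝ) (m : ℕ) :
    ∑ t ∈ Finset.Icc 1 m, f t = ∑ k ∈ Finset.range m, f (k + 1) := by
  induction m with
  | zero => simp
  | succ n ih =>
      rw [Finset.sum_Icc_succ_top (Nat.le_add_left 1 n), ih, Finset.sum_range_succ]

lemma aux_abel (X : ℕ → ℝ) (n : ℕ) :
    ∑ k ∈ Finset.range n,
      ((2 * (k : ℝ) + 1) * (X (k + 1) - X k) + (X (k + 1)) ^ 2 - (X k) ^ 2)
    = (2 * (n : ℝ) - 1) * X n + X 0 - 2 * ∑ k ∈ Finset.range n, X k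
      + (X n) ^ 2 - (X 0) ^ 2 := by
  induction n with
  | zero => simp
  | succ n ih =>
      rw [Finset.sum_range_succ, ih, Finset.sum_range_succ]
      push_cast; ring

lemma aux_int (A B a b : ℝ) :
    ∫ lam in a..b, (A + B * lam) = A * (b - a) + B * ((b ^ 2 - a ^ 2) / 2) := by
  have h1 : IntervalIntegrable (fun x : ℝ => B * x) volume a b :=
    (continuous_const.mul continuous_id).intervalIntegrable _ _
  rw [intervalIntegral.integral_add intervalIntegrable_const h1,
    intervalIntegral.integral_const, intervalIntegral.integral_const_mul, integral_id]
  simp [smul_eq_mul]; ring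

/-- The expected completion time of a coflow under the Stretch algorithm (with
`λ` drawn from the density `f(v) = 2v`) is at most twice the LP lower bound
`1 + ∑_{t=1}^{T-1} (1 - X t)` on its LP completion time. Here `x` is the LP
schedule, `X` its cumulative version, `X̃` the piecewise-linear continuous-time
extension, and `C λ` the earliest continuous time by which a `λ`-fraction of the
coflow is completed. -/
theorem stretch_two_approximation
    (T : ℕ) (hT : 0 < T) (x : ℕ → ℝ)
    (hx : ∀ t ∈ Finset.Icc 1 T, 0 ≤ x t)
    (hsum : ∑ t ∈ Finset.Icc 1 T, x t = 1)
    (X : ℕ → ℝ) (hX : ∀ t, X t = ∑ ℓ ∈ Finset.Icc 1 t, x ℓ)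
    (Xt : ℝ → ℝ)
    (hXt : ∀ τ : ℝ, Xt τ = X ⌊τ⌋₊ + (τ - (⌊τ⌋₊ : ℝ)) * (X (⌊τ⌋₊ + 1) - X ⌊τ⌋₊))
    (C : ℝ → ℝ)
    (hC : ∀ lam ∈ Set.Ioc (0:ℝ) 1,
      C lam = sInf {τ : ℝ | τ ∈ Set.Icc (0:ℝ) (T:ℝ) ∧ lam ≤ Xt τ}) :
    ∫ lam in (0:ℝ)..1, 2 * lam * (⌈C lam / lam⌉ : ℝ)
      ≤ 2 * (1 + ∑ t ∈ Finset.Icc 1 (T - 1), (1 - X t)) := by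
  have hX0 : X 0 = 0 := by rw [hX]; simp
  have hXT : X T = 1 := by rw [hX]; exact hsum
  have hmono : ∀ s t : ℕ, s ≤ t → t ≤ T → X s ≤ X t := by
    intro s t hst htT
    rw [hX, hX]
    refine Finset.sum_le_sum_of_subset_of_nonneg (Finset.Icc_subset_Icc_right hst) ?_
    intro i hi _
    exact hx i (Finset.mem_Icc.mpr ⟨(Finset.mem_Icc.mp hi).1,
      le_trans (Finset.mem_Icc.mp hi).2 htT⟩)
  have hX0le : ∀ t, t ≤ T → 0 ≤ X t := fun t ht => hX0 ▸ hmono 0 t (Nat.zero_le t) ht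
  have hXle1 : ∀ t, t ≤ T → X t ≤ 1 := fun t ht => hXT ▸ hmono t T ht le_rfl
  have hXtnat : ∀ n : ℕ, Xt (n : ℝ) = X n := by
    intro n; rw [hXt]; simp
  have hRHS : (0:ℝ) ≤ 2 * (1 + ∑ t ∈ Finset.Icc 1 (T - 1), (1 - X t)) := by
    have h : ∀ t ∈ Finset.Icc 1 (T - 1), (0:ℝ) ≤ 1 - X t := by
      intro t ht
      have := hXle1 t (le_trans (Finset.mem_Icc.mp ht).2 (Nat.sub_le T 1))
      linarith
    have := Finset.sum_nonneg h
    linarith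
  by_cases hint : IntervalIntegrable (fun lam => 2 * lam * (⌈C lam / lam⌉ : ℝ)) volume 0 1
  swap
  · rw [intervalIntegral.integral_undef hint]; exact hRHS
  -- C is at most the piecewise-linear inverse time
  have hCle : ∀ k : ℕ, k < T → ∀ lam ∈ Set.Icc (X k) (X (k + 1)), 0 < lam →
      C lam ≤ (k : ℝ) + (lam - X k) / (X (k + 1) - X k) := by
    intro k hk lam hlam hlam0
    have hk1 : k + 1 ≤ T := hk
    have hlam1 : lam ≤ 1 := le_trans hlam.2 (hXle1 _ hk1)
    rw [hC lam ⟨hlam0, hlam1⟩]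
    have hbdd : BddBelow {τ : ℝ | τ ∈ Set.Icc (0:ℝ) (T:ℝ) ∧ lam ≤ Xt τ} :=
      ⟨0, fun τ hτ => hτ.1.1⟩
    have hΔ0 : 0 ≤ X (k + 1) - X k := by
      have := hmono k (k + 1) (Nat.le_succ k) hk1; linarith
    have hkT : ((k : ℝ) + 1) ≤ (T : ℝ) := by exact_mod_cast hk1
    rcases eq_or_lt_of_le hΔ0 with hΔ | hΔ
    · -- degenerate slot: lam = X k
      have hlameq : lam = X k := le_antisymm (by linarith [hlam.2]) hlam.1
      have hrz : (lam - X k) / (X (k + 1) - X k) = 0 := by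
        rw [hlameq]; simp
      rw [hrz, add_zero]
      apply csInf_le hbdd
      refine ⟨⟨Nat.cast_nonneg k, by linarith⟩, ?_⟩
      rw [hXtnat k, hlameq]
    · have hr0 : 0 ≤ (lam - X k) / (X (k + 1) - X k) :=
        div_nonneg (by linarith [hlam.1]) hΔ.le
      rcases lt_or_eq_of_le hlam.2 with hlt | heq
      · -- interior of slot
        have hrlt : (lam - X k) / (X (k + 1) - X k) < 1 :=
          (div_lt_one hΔ).mpr (by linarith)
        apply csInf_le hbdd
        refine ⟨⟨by positivity, by linarith⟩, ?_⟩
        have hfl : ⌊(k : ℝ) + (lam - X k) / (X (k + 1) - X k)⌋₊ = k := by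
          rw [Nat.floor_eq_iff (by positivity)]
          constructor
          · linarith
          · push_cast; linarith
        rw [hXt, hfl]
        have h2 : ((k : ℝ) + (lam - X k) / (X (k + 1) - X k) - (k : ℝ))
            * (X (k + 1) - X k) = lam - X k := by
          rw [show (k : ℝ) + (lam - X k) / (X (k + 1) - X k) - (k : ℝ)
              = (lam - X k) / (X (k + 1) - X k) from by ring]
          exact div_mul_cancel₀ _ (ne_of_gt hΔ)
        push_cast
        push_cast at h2
        linarith [h2]
      · -- lam = X (k+1)
        have hre : (lam - X k) / (X (k + 1) - X k) = 1 := by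
          rw [heq]; exact div_self (ne_of_gt hΔ)
        rw [hre]
        apply csInf_le hbdd
        have hcast : (k : ℝ) + 1 = ((k + 1 : ℕ) : ℝ) := by push_cast; ring
        refine ⟨⟨by positivity, by linarith⟩, ?_⟩
        rw [hcast, hXtnat (k + 1), heq]
  -- pointwise bound on each slot
  have key : ∀ k : ℕ, k < T → ∀ lam ∈ Set.Icc (X k) (X (k + 1)),
      2 * lam * (⌈C lam / lam⌉ : ℝ)
        ≤ 2 * ((k : ℝ) + (lam - X k) / (X (k + 1) - X k)) + 2 * lam := by
    intro k hk lam hlam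
    have h0lam : 0 ≤ lam := le_trans (hX0le k hk.le) hlam.1
    rcases eq_or_lt_of_le h0lam with h0 | h0
    · have hXk : X k = 0 := le_antisymm (h0 ▸ hlam.1) (hX0le k hk.le)
      rw [← h0]
      simp [hXk]
    · have hceil : (⌈C lam / lam⌉ : ℝ) ≤ C lam / lam + 1 := (Int.ceil_lt_add_one _).le
      have h1 : 2 * lam * (⌈C lam / lam⌉ : ℝ) ≤ 2 * lam * (C lam / lam + 1) :=
        mul_le_mul_of_nonneg_left hceil (by positivity)
      have h2 : 2 * lam * (C lam / lam + 1) = 2 * C lam + 2 * lam := by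
        field_simp
      have h3 := hCle k hk lam hlam h0
      rw [h2] at h1
      linarith
  -- subinterval inclusion
  have hsub : ∀ k, k < T → Set.uIcc (X k) (X (k + 1)) ⊆ Set.uIcc (0:ℝ) 1 := by
    intro k hk
    rw [Set.uIcc_of_le (hmono k (k + 1) (Nat.le_succ k) hk),
      Set.uIcc_of_le zero_le_one]
    exact Set.Icc_subset_Icc (hX0le k hk.le) (hXle1 (k + 1) hk)
  -- split the integral
  have hsplit : (∫ lam in (0:ℝ)..1, 2 * lam * (⌈C lam / lam⌉ : ℝ))
      = ∑ k ∈ Finset.range T,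
          ∫ lam in (X k)..(X (k + 1)), 2 * lam * (⌈C lam / lam⌉ : ℝ) := by
    rw [intervalIntegral.sum_integral_adjacent_intervals (a := fun k => X k)
      (fun k hk => hint.mono_set (hsub k hk))]
    rw [hX0, hXT]
  -- per-slot integral of the bounding function
  have hpiece : ∀ k : ℕ,
      (∫ lam in (X k)..(X (k + 1)),
          (2 * ((k : ℝ) + (lam - X k) / (X (k + 1) - X k)) + 2 * lam))
      = (2 * (k : ℝ) + 1) * (X (k + 1) - X k) + (X (k + 1)) ^ 2 - (X k) ^ 2 := by
    intro k
    by_cases hΔ : X (k + 1) - X k = 0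
    · have heq : X (k + 1) = X k := by linarith
      rw [heq, intervalIntegral.integral_same]; ring
    · rw [intervalIntegral.integral_congr
        (g := fun lam => (2 * (k : ℝ) - 2 * X k / (X (k + 1) - X k))
          + (2 / (X (k + 1) - X k) + 2) * lam)
        (fun lam _ => by field_simp; ring)]
      rw [aux_int]
      field_simp
      ring
  have hmonoint : ∀ k ∈ Finset.range T,
      (∫ lam in (X k)..(X (k + 1)), 2 * lam * (⌈C lam / lam⌉ : ℝ))
      ≤ (2 * (k : ℝ) + 1) * (X (k + 1) - X k) + (X (k + 1)) ^ 2 - (X k) ^ 2 := by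
    intro k hk
    rw [Finset.mem_range] at hk
    rw [← hpiece k]
    have hgc : Continuous (fun lam : ℝ =>
        2 * ((k : ℝ) + (lam - X k) / (X (k + 1) - X k)) + 2 * lam) := by
      fun_prop
    exact intervalIntegral.integral_mono_on (hmono k (k + 1) (Nat.le_succ k) hk)
      (hint.mono_set (hsub k hk)) (hgc.intervalIntegrable _ _) (key k hk)
  calc (∫ lam in (0:ℝ)..1, 2 * lam * (⌈C lam / lam⌉ : ℝ))
      = ∑ k ∈ Finset.range T,
          ∫ lam in (X k)..(X (k + 1)), 2 * lam * (⌈C lam / lam⌉ : ℝ) := hsplit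
    _ ≤ ∑ k ∈ Finset.range T,
          ((2 * (k : ℝ) + 1) * (X (k + 1) - X k) + (X (k + 1)) ^ 2 - (X k) ^ 2) :=
        Finset.sum_le_sum hmonoint
    _ ≤ 2 * (1 + ∑ t ∈ Finset.Icc 1 (T - 1), (1 - X t)) := by
        rw [aux_abel X T, hX0, hXT]
        obtain ⟨m, rfl⟩ : ∃ m, T = m + 1 := ⟨T - 1, (Nat.succ_pred_eq_of_pos hT).symm⟩
        simp only [Nat.add_sub_cancel]
        rw [Finset.sum_range_succ' X m, hX0, aux_sum_Icc (fun t => 1 - X t) m]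
        rw [Finset.sum_sub_distrib, Finset.sum_const, Finset.card_range]
        simp only [nsmul_eq_mul, mul_one]
        push_cast
        linarith
end

section
/- Let T and J be positive integers and let x : {1,...,J} × {1,...,T} → ℝ≥0 satisfy ∑_{j=1}^{J} x_j(t) ≤ 1 for every time slot t (unit machine capacity) and ∑_{t=1}^{T} x_j(t) = d_j for every job j, where d_j ≥ 0. For each job j let C_j = max { t : x_j(t) > 0 } be its completion time. If the jobs are ordered l_1, l_2, ..., l_J so that C_{l_1} ≤ C_{l_2} ≤ ... ≤ C_{l_J}, then for every k ∈ {1,...,J}: ∑_{r=1}^{k} d_{l_r} ≤ C_{l_k}. -/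
/-!
All work of the first `k` jobs in the order happens in slots `t ≤ C (l k)`, since each of them
completes by then. The machine does at most one unit of work per slot, so this work, which is
their total demand, is at most the number of slots `1, …, C (l k)`.
-/

open Finset

lemma le_sup_filter_pos_of_ne_zero {s : Finset ℕ} {f : ℕ → ℝ} (hf : ∀ t ∈ s, 0 ≤ f t)
    {t : ℕ} (ht : t ∈ s) (hft : f t ≠ 0) : t ≤ (s.filter (fun t => 0 < f t)).sup id :=
  le_sup (f := id) (mem_filter.mpr ⟨ht, (hf t ht).lt_of_ne' hft⟩)

lemma sum_work_le_of_support_le {ι : Type*} {I J : Finset ι} (hIJ : I ⊆ J) (T c : ℕ)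
    (x : ι → ℕ → ℝ) (hx0 : ∀ j ∈ J, ∀ t ∈ Icc 1 T, 0 ≤ x j t)
    (hcap : ∀ t ∈ Icc 1 T, ∑ j ∈ J, x j t ≤ 1)
    (hsupp : ∀ j ∈ I, ∀ t ∈ Icc 1 T, x j t ≠ 0 → t ≤ c) :
    ∑ j ∈ I, ∑ t ∈ Icc 1 T, x j t ≤ c := by
  set S := (Icc 1 T).filter (· ≤ c)
  have hS : S ⊆ Icc 1 c := fun t ht => by
    rw [mem_filter, mem_Icc] at ht
    exact mem_Icc.mpr ⟨ht.1.1, ht.2⟩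
  have hslot : ∀ t ∈ S, ∑ j ∈ I, x j t ≤ 1 := fun t ht =>
    have htT := (mem_filter.mp ht).1
    (sum_le_sum_of_subset_of_nonneg hIJ fun j hj _ => hx0 j hj t htT).trans (hcap t htT)
  calc ∑ j ∈ I, ∑ t ∈ Icc 1 T, x j t
      = ∑ j ∈ I, ∑ t ∈ S, x j t :=
        sum_congr rfl fun j hj => (sum_filter_of_ne fun t ht => hsupp j hj t ht).symm
    _ = ∑ t ∈ S, ∑ j ∈ I, x j t := sum_comm
    _ ≤ ∑ _t ∈ S, (1 : ℝ) := sum_le_sum hslot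
    _ = S.card := by rw [sum_const, nsmul_one]
    _ ≤ c := by exact_mod_cast (card_le_card hS).trans (Nat.card_Icc 1 c).le

theorem fractional_schedule_prefix_demand_bound_general
    (T J : ℕ)
    (x : ℕ → ℕ → ℝ) (d : ℕ → ℝ) (C : ℕ → ℕ) (l : ℕ → ℕ)
    (hx0 : ∀ j ∈ Finset.Icc 1 J, ∀ t ∈ Finset.Icc 1 T, 0 ≤ x j t)
    (hcap : ∀ t ∈ Finset.Icc 1 T, ∑ j ∈ Finset.Icc 1 J, x j t ≤ 1)
    (hdem : ∀ j ∈ Finset.Icc 1 J, ∑ t ∈ Finset.Icc 1 T, x j t = d j)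
    (hC : ∀ j ∈ Finset.Icc 1 J,
      C j = ((Finset.Icc 1 T).filter (fun t => 0 < x j t)).sup id)
    (hl : Set.BijOn l (Set.Icc 1 J) (Set.Icc 1 J))
    (hmono : ∀ r ∈ Finset.Icc 1 J, ∀ r' ∈ Finset.Icc 1 J,
      r ≤ r' → C (l r) ≤ C (l r')) :
    ∀ k ∈ Finset.Icc 1 J, ∑ r ∈ Finset.Icc 1 k, d (l r) ≤ (C (l k) : ℝ) := by
  intro k hk
  have hprefix : Icc 1 k ⊆ Icc 1 J := Icc_subset_Icc_right (mem_Icc.mp hk).2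
  have hmaps : ∀ r ∈ Icc 1 k, l r ∈ Icc 1 J := fun r hr => by
    simpa using hl.mapsTo (by simpa using hprefix hr)
  have hinj : Set.InjOn l (Icc 1 k) := by
    rw [coe_Icc]
    exact hl.injOn.mono (Set.Icc_subset_Icc_right (mem_Icc.mp hk).2)
  have himage : (Icc 1 k).image l ⊆ Icc 1 J := image_subset_iff.mpr hmaps
  rw [← sum_image hinj, ← sum_congr rfl fun j hj => hdem j (himage hj)]
  refine sum_work_le_of_support_le himage T _ x hx0 hcap fun j hj t ht hxt => ?_
  obtain ⟨r, hr, rfl⟩ := mem_image.mp hj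
  calc t ≤ C (l r) := hC _ (hmaps r hr) ▸ le_sup_filter_pos_of_ne_zero (hx0 _ (hmaps r hr)) ht hxt
    _ ≤ C (l k) := hmono r (hprefix hr) k hk (mem_Icc.mp hr).2

/-- The key combinatorial lemma in the hardness proof: given a fractional,
possibly preemptive schedule `x` of jobs `1, ..., J` on a unit-capacity machine
over time slots `1, ..., T`, with demands `d j` and fractional completion times
`C j = max {t : x j t > 0}`, if the jobs are ordered `l 1, ..., l J` by
non-decreasing completion time, then the total demand of the first `k` jobs in
this order is at most `C (l k)`. -/
theorem fractional_schedule_prefix_demand_bound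
    (T J : ℕ) (hT : 0 < T) (hJ : 0 < J)
    (x : ℕ → ℕ → ℝ) (d : ℕ → ℝ) (C : ℕ → ℕ) (l : ℕ → ℕ)
    (hx0 : ∀ j ∈ Finset.Icc 1 J, ∀ t ∈ Finset.Icc 1 T, 0 ≤ x j t)
    (hcap : ∀ t ∈ Finset.Icc 1 T, ∑ j ∈ Finset.Icc 1 J, x j t ≤ 1)
    (hdem : ∀ j ∈ Finset.Icc 1 J, ∑ t ∈ Finset.Icc 1 T, x j t = d j)
    (hd0 : ∀ j ∈ Finset.Icc 1 J, 0 ≤ d j)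
    (hC : ∀ j ∈ Finset.Icc 1 J,
      C j = ((Finset.Icc 1 T).filter (fun t => 0 < x j t)).sup id)
    (hl : Set.BijOn l (Set.Icc 1 J) (Set.Icc 1 J))
    (hmono : ∀ r ∈ Finset.Icc 1 J, ∀ r' ∈ Finset.Icc 1 J,
      r ≤ r' → C (l r) ≤ C (l r')) :
    ∀ k ∈ Finset.Icc 1 J, ∑ r ∈ Finset.Icc 1 k, d (l r) ≤ (C (l k) : ℝ) :=
  fractional_schedule_prefix_demand_bound_general T J x d C l hx0 hcap hdem hC hl hmono
end

section
/- Let ε > 0, let T ≥ 1 be an integer, define τ_0 = 0 and τ_k = (1+ε)^{k−1} for 1 ≤ k ≤ T, and let X : {0,1,...,T} → [0,1] be nondecreasing with X(0) = 0 and X(T) = 1. Let X̂ : [0, τ_T] → [0,1] be the piecewise-linear interpolation of X with respect to the breakpoints τ_0 < ... < τ_T, and for λ ∈ (0,1] define C(λ) = inf { t ∈ [0, τ_T] : X̂(t) ≥ λ }. Then ∫_{0}^{1} 2λ·⌈C(λ)/λ⌉ dλ ≤ 2(1+ε)·(1 + ∑_{ρ=1}^{T-1} (τ_ρ − τ_{ρ−1})·(1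 − X(ρ))). -/
/-!
Since `⌈c / λ⌉ < c / λ + 1`, the integrand is below `2 C(λ) + 2λ`, so the left side is at most
`2 ∫₀¹ C + 1`. On `[X(i), X(i+1)]` the first hitting time `C` lies below the inverse of the
linear piece of `X̂` on `[τ_i, τ_{i+1}]`, so `∫₀¹ C` is at most the trapezoid sum
`½ ∑ (X(i+1) - X(i)) (τ_i + τ_{i+1})`. Summation by parts (using `τ_0 = 0`, `X(T) = 1`) rewrites
twice this sum as `∑ (τ_{i+1} - τ_i) ((1 - X(i)) + (1 - X(i+1)))`. The terms with `1 - X(i+1)`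
add up to the sum `S` on the right; in those with `1 - X(i)` the gaps `τ_{i+1} - τ_i` grow by at
most the factor `1 + ε` per step, so they add up to at most `1 + (1 + ε) S`. Altogether the left side is at most `2 + (2 + ε) S ≤ 2(1 + ε)(1 + S)`.
-/

open Finset intervalIntegral MeasureTheory

noncomputable def firstHit (f : ℝ → ℝ) (B l : ℝ) : ℝ := sInf {t | t ∈ Set.Icc 0 B ∧ l ≤ f t}

section FirstHit

variable {f : ℝ → ℝ} {B l t : ℝ}

lemma firstHit_nonneg : 0 ≤ firstHit f B l :=
  Real.sInf_nonneg fun _ ht => ht.1.1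

lemma firstHit_le (ht : t ∈ Set.Icc 0 B) (hl : l ≤ f t) : firstHit f B l ≤ t :=
  csInf_le ⟨0, fun _ hs => hs.1.1⟩ ⟨ht, hl⟩

lemma monotoneOn_firstHit {c : ℝ} (hc : c ∈ Set.Icc 0 B) :
    MonotoneOn (firstHit f B) (Set.Iic (f c)) :=
  fun _ _ _ hl' hll' =>
    csInf_le_csInf ⟨0, fun _ hs => hs.1.1⟩ ⟨c, hc, hl'⟩ fun _ hs => ⟨hs.1, hll'.trans hs.2⟩

end FirstHit

lemma intervalIntegral_le_trapezoid {g : ℝ → ℝ} {x₀ x₁ a b : ℝ} (hx : x₀ ≤ x₁)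
    (hg : IntervalIntegrable g volume x₀ x₁)
    (hle : ∀ l ∈ Set.Icc x₀ x₁, g l ≤ a + (b - a) / (x₁ - x₀) * (l - x₀)) :
    ∫ l in x₀..x₁, g l ≤ (x₁ - x₀) * (a + b) / 2 := by
  rcases hx.eq_or_lt with rfl | hx
  · simp
  calc ∫ l in x₀..x₁, g l ≤ ∫ l in x₀..x₁, (a + (b - a) / (x₁ - x₀) * (l - x₀)) :=
        integral_mono_on hx.le hg (Continuous.intervalIntegrable (by fun_prop) _ _) hle
    _ = (x₁ - x₀) * (a + b) / 2 := by
        rw [integral_comp_sub_right (fun l => a + (b - a) / (x₁ - x₀) * l),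
          intervalIntegral.integral_add intervalIntegrable_const
            (intervalIntegrable_id.const_mul _),
          intervalIntegral.integral_const, intervalIntegral.integral_const_mul, integral_id,
          sub_self, smul_eq_mul]
        field_simp [sub_ne_zero.2 hx.ne']
        ring

section AffineSegment

variable {f : ℝ → ℝ} {B a b x₀ x₁ l : ℝ}

-- The affine map `t ↦ x₀ + (t - a) / (b - a) * (x₁ - x₀)` sends this point to `l`; for
-- `x₀ = x₁` the division by zero makes it `a`, which is still correct.
lemma affine_inverse_mem_Icc (hab : a ≤ b) (hl : l ∈ Set.Icc x₀ x₁) :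
    a + (b - a) / (x₁ - x₀) * (l - x₀) ∈ Set.Icc a b := by
  obtain ⟨hl₀, hl₁⟩ := hl
  have h0 : 0 ≤ (l - x₀) / (x₁ - x₀) := div_nonneg (by linarith) (by linarith)
  have h1 : (l - x₀) / (x₁ - x₀) ≤ 1 := div_le_one_of_le₀ (by linarith) (by linarith)
  rw [div_mul_comm, mul_comm]
  constructor <;> nlinarith

lemma affine_apply_affine_inverse (hab : a < b) (hl : l ∈ Set.Icc x₀ x₁) :
    x₀ + (a + (b - a) / (x₁ - x₀) * (l - x₀) - a) / (b - a) * (x₁ - x₀) = l := by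
  rcases eq_or_ne x₁ x₀ with rfl | hx
  · simp [le_antisymm hl.2 hl.1]
  · field_simp [sub_ne_zero.2 hx, sub_ne_zero.2 hab.ne']
    ring

lemma firstHit_le_affine_inverse (ha : 0 ≤ a) (hab : a < b) (hbB : b ≤ B)
    (hf : ∀ t ∈ Set.Icc a b, f t = x₀ + (t - a) / (b - a) * (x₁ - x₀))
    (hl : l ∈ Set.Icc x₀ x₁) :
    firstHit f B l ≤ a + (b - a) / (x₁ - x₀) * (l - x₀) := by
  have ht := affine_inverse_mem_Icc hab.le hl
  exact firstHit_le ⟨ha.trans ht.1, ht.2.trans hbB⟩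
    (by rw [hf _ ht, affine_apply_affine_inverse hab hl])

lemma intervalIntegrable_firstHit (ha : 0 ≤ a) (hab : a < b) (hbB : b ≤ B)
    (hf : ∀ t ∈ Set.Icc a b, f t = x₀ + (t - a) / (b - a) * (x₁ - x₀)) (hx : x₀ ≤ x₁) :
    IntervalIntegrable (firstHit f B) volume x₀ x₁ := by
  have hfb : f b = x₁ := by
    rw [hf b ⟨hab.le, le_rfl⟩, div_self (sub_ne_zero.2 hab.ne')]
    ring
  refine ((monotoneOn_firstHit ⟨ha.trans hab.le, hbB⟩).mono ?_).intervalIntegrable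
  rw [hfb, Set.uIcc_of_le hx]
  exact Set.Icc_subset_Iic_self

lemma integral_firstHit_le_trapezoid (ha : 0 ≤ a) (hab : a < b) (hbB : b ≤ B)
    (hf : ∀ t ∈ Set.Icc a b, f t = x₀ + (t - a) / (b - a) * (x₁ - x₀)) (hx : x₀ ≤ x₁) :
    ∫ l in x₀..x₁, firstHit f B l ≤ (x₁ - x₀) * (a + b) / 2 :=
  intervalIntegral_le_trapezoid hx (intervalIntegrable_firstHit ha hab hbB hf hx)
    fun _ hl => firstHit_le_affine_inverse ha hab hbB hf hl

end AffineSegment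

section Piecewise

variable {f : ℝ → ℝ} {τ X : ℕ → ℝ} {n : ℕ}

lemma intervalIntegrable_firstHit_piecewise (hτ : StrictMono τ) (hτ0 : 0 ≤ τ 0)
    (hX : ∀ i < n, X i ≤ X (i + 1))
    (hf : ∀ i < n, ∀ t ∈ Set.Icc (τ i) (τ (i + 1)),
      f t = X i + (t - τ i) / (τ (i + 1) - τ i) * (X (i + 1) - X i)) (i : ℕ) (hi : i < n) :
    IntervalIntegrable (firstHit f (τ n)) volume (X i) (X (i + 1)) :=
  intervalIntegrable_firstHit (hτ0.trans (hτ.monotone i.zero_le)) (hτ i.lt_succ_self)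
    (hτ.monotone hi) (hf i hi) (hX i hi)

lemma integral_firstHit_le_sum_trapezoid (hτ : StrictMono τ) (hτ0 : 0 ≤ τ 0)
    (hX : ∀ i < n, X i ≤ X (i + 1))
    (hf : ∀ i < n, ∀ t ∈ Set.Icc (τ i) (τ (i + 1)),
      f t = X i + (t - τ i) / (τ (i + 1) - τ i) * (X (i + 1) - X i)) :
    ∫ l in X 0..X n, firstHit f (τ n) l
      ≤ ∑ i ∈ range n, (X (i + 1) - X i) * (τ i + τ (i + 1)) / 2 := by
  rw [← sum_integral_adjacent_intervals (intervalIntegrable_firstHit_piecewise hτ hτ0 hX hf)]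
  refine sum_le_sum fun i hi => ?_
  rw [mem_range] at hi
  exact integral_firstHit_le_trapezoid (hτ0.trans (hτ.monotone i.zero_le)) (hτ i.lt_succ_self)
    (hτ.monotone hi) (hf i hi) (hX i hi)

end Piecewise

lemma integral_mul_ceil_div_le {C : ℝ → ℝ} (hC : IntervalIntegrable C volume 0 1)
    (hC0 : ∀ l ∈ Set.Ioc (0 : ℝ) 1, 0 ≤ C l) :
    ∫ l in (0 : ℝ)..1, 2 * l * (⌈C l / l⌉ : ℝ) ≤ 2 * (∫ l in (0 : ℝ)..1, C l) + 1 := by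
  have hbound : ∀ l ∈ Set.Ioc (0 : ℝ) 1, 2 * l * (⌈C l / l⌉ : ℝ) ≤ 2 * C l + 2 * l := by
    intro l hl
    have := Int.ceil_lt_add_one (C l / l)
    calc 2 * l * (⌈C l / l⌉ : ℝ) ≤ 2 * l * (C l / l + 1) := by gcongr; linarith [hl.1]
      _ = 2 * C l + 2 * l := by field_simp [hl.1.ne']
  have hg : IntervalIntegrable (fun l => 2 * C l + 2 * l) volume 0 1 :=
    (hC.const_mul 2).add (Continuous.intervalIntegrable (by fun_prop) _ _)
  have hint : IntervalIntegrable (fun l : ℝ => 2 * l * (⌈C l / l⌉ : ℝ)) volume 0 1 := by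
    rw [intervalIntegrable_iff_integrableOn_Ioc_of_le zero_le_one] at hg ⊢
    refine hg.mono' ?_ ((ae_restrict_mem measurableSet_Ioc).mono fun l hl => ?_)
    · have hCm := hC.1.aestronglyMeasurable.aemeasurable
      exact (by measurability : AEMeasurable _ _).aestronglyMeasurable
    · have hceil : (0 : ℝ) ≤ ⌈C l / l⌉ :=
        Int.cast_nonneg (Int.ceil_nonneg (div_nonneg (hC0 l hl) hl.1.le))
      rw [Real.norm_eq_abs, abs_of_nonneg (mul_nonneg (by linarith [hl.1]) hceil)]
      exact hbound l hl
  calc ∫ l in (0 : ℝ)..1, 2 * l * (⌈C l / l⌉ : ℝ) ≤ ∫ l in (0 : ℝ)..1, (2 * C l + 2 * l) :=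
        integral_mono_on_of_le_Ioo zero_le_one hint hg
          fun l hl => hbound l (Set.Ioo_subset_Ioc_self hl)
    _ = 2 * (∫ l in (0 : ℝ)..1, C l) + 1 := by
        rw [intervalIntegral.integral_add (hC.const_mul 2) (intervalIntegrable_id.const_mul 2),
          intervalIntegral.integral_const_mul, intervalIntegral.integral_const_mul, integral_id]
        norm_num

lemma sum_trapezoid_eq_sum_gap_mul {τ X : ℕ → ℝ} (n : ℕ) (hτ0 : τ 0 = 0) (hXn : X n = 1) :
    ∑ i ∈ range n, (X (i + 1) - X i) * (τ i + τ (i + 1))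
      = ∑ i ∈ range n, (τ (i + 1) - τ i) * ((1 - X i) + (1 - X (i + 1))) := by
  have hterm : ∀ i, (X (i + 1) - X i) * (τ i + τ (i + 1))
      = (τ (i + 1) - τ i) * ((1 - X i) + (1 - X (i + 1)))
        + 2 * ((X (i + 1) - 1) * τ (i + 1) - (X i - 1) * τ i) := fun i => by ring
  simp only [hterm, sum_add_distrib, ← mul_sum, sum_range_sub (fun k => (X k - 1) * τ k), hτ0,
    hXn]
  ring

lemma sum_gap_mul_le_of_gap_le {τ w : ℕ → ℝ} {q : ℝ} (m : ℕ)
    (hgap : ∀ i < m, τ (i + 2) - τ (i + 1) ≤ q * (τ (i + 1) - τ i))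
    (hw : ∀ i < m, 0 ≤ w (i + 1)) :
    ∑ i ∈ range (m + 1), (τ (i + 1) - τ i) * w i
      ≤ (τ 1 - τ 0) * w 0 + q * ∑ i ∈ range m, (τ (i + 1) - τ i) * w (i + 1) := by
  rw [sum_range_succ', mul_sum, add_comm]
  refine add_le_add_right (sum_le_sum fun i hi => ?_) _
  rw [← mul_assoc]
  exact mul_le_mul_of_nonneg_right (hgap i (mem_range.1 hi)) (hw i (mem_range.1 hi))

lemma sum_range_add_one_eq_sum_Icc_one {M : Type*} [AddCommMonoid M] (F : ℕ → M) (m : ℕ) :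
    ∑ i ∈ range m, F (i + 1) = ∑ i ∈ Icc 1 m, F i := by
  rw [range_eq_Ico, sum_Ico_add' F, Ico_add_one_right_eq_Icc]

def geomBreakpoint (ε : ℝ) (k : ℕ) : ℝ := if k = 0 then 0 else (1 + ε) ^ (k - 1)

section GeomBreakpoint

variable {ε : ℝ}

@[simp] lemma geomBreakpoint_zero : geomBreakpoint ε 0 = 0 := rfl

@[simp] lemma geomBreakpoint_succ (k : ℕ) : geomBreakpoint ε (k + 1) = (1 + ε) ^ k := by
  simp [geomBreakpoint]

lemma strictMono_geomBreakpoint (hε : 0 < ε) : StrictMono (geomBreakpoint ε) := by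
  refine strictMono_nat_of_lt_succ fun k => ?_
  cases k with
  | zero => simp
  | succ k =>
    simp only [geomBreakpoint_succ, pow_succ]
    nlinarith [pow_pos (by linarith : (0 : ℝ) < 1 + ε) k]

lemma geomBreakpoint_gap_succ_le (i : ℕ) :
    geomBreakpoint ε (i + 2) - geomBreakpoint ε (i + 1)
      ≤ (1 + ε) * (geomBreakpoint ε (i + 1) - geomBreakpoint ε i) := by
  cases i with
  | zero => simp
  | succ k =>
    simp only [geomBreakpoint_succ]
    exact le_of_eq (by ring)

lemma sum_trapezoid_geomBreakpoint_le {X : ℕ → ℝ} (m : ℕ) (hX0 : X 0 = 0)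
    (hXm : X (m + 1) = 1) (hX1 : ∀ i < m, X (i + 1) ≤ 1) :
    ∑ i ∈ range (m + 1), (X (i + 1) - X i) * (geomBreakpoint ε i + geomBreakpoint ε (i + 1))
      ≤ 1 + (2 + ε) * ∑ ρ ∈ Icc 1 m,
          (geomBreakpoint ε ρ - geomBreakpoint ε (ρ - 1)) * (1 - X ρ) := by
  let Δ i := geomBreakpoint ε (i + 1) - geomBreakpoint ε i
  have hS : ∑ ρ ∈ Icc 1 m, (geomBreakpoint ε ρ - geomBreakpoint ε (ρ - 1)) * (1 - X ρ)
      = ∑ i ∈ range m, Δ i * (1 - X (i + 1)) := by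
    simp only [Δ, ← sum_range_add_one_eq_sum_Icc_one, Nat.add_sub_cancel]
  have hright : ∑ i ∈ range (m + 1), Δ i * (1 - X (i + 1))
      = ∑ i ∈ range m, Δ i * (1 - X (i + 1)) := by
    rw [sum_range_succ, hXm, sub_self, mul_zero, add_zero]
  have hleft : ∑ i ∈ range (m + 1), Δ i * (1 - X i)
      ≤ 1 + (1 + ε) * ∑ i ∈ range m, Δ i * (1 - X (i + 1)) := by
    simpa [Δ, hX0] using sum_gap_mul_le_of_gap_le (w := fun i => 1 - X i) m
      (fun i _ => geomBreakpoint_gap_succ_le i) fun i hi => sub_nonneg.2 (hX1 i hi)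
  rw [sum_trapezoid_eq_sum_gap_mul _ geomBreakpoint_zero hXm, hS]
  simp only [mul_add, sum_add_distrib]
  linarith

end GeomBreakpoint

/-- The expected completion time of a coflow under the Stretch algorithm with
geometric time intervals: with breakpoints `τ 0 = 0`, `τ k = (1+ε)^(k-1)`,
`X : {0,...,T} → [0,1]` nondecreasing with `X 0 = 0`, `X T = 1`, `X̂` its
piecewise-linear interpolation with respect to these breakpoints, and
`C λ = inf { t ∈ [0, τ T] : X̂ t ≥ λ }`, the expected stretched completion time
`∫_0^1 2λ·⌈C(λ)/λ⌉ dλ` is at most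
`2(1+ε)·(1 + ∑_{ρ=1}^{T-1} (τ ρ - τ (ρ-1)) (1 - X ρ))`. -/
theorem stretch_geometric_two_plus_eps_approximation
    (ε : ℝ) (hε : 0 < ε) (T : ℕ) (hT : 1 ≤ T)
    (τ : ℕ → ℝ)
    (hτ : ∀ k, τ k = if k = 0 then 0 else (1 + ε) ^ (k - 1))
    (X : ℕ → ℝ)
    (hXmono : ∀ k k' : ℕ, k ≤ k' → k' ≤ T → X k ≤ X k')
    (hXrange : ∀ k : ℕ, k ≤ T → X k ∈ Set.Icc (0:ℝ) 1)
    (hX0 : X 0 = 0) (hXT : X T = 1)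
    (Xhat : ℝ → ℝ)
    (hXhat : ∀ ρ : ℕ, 1 ≤ ρ → ρ ≤ T → ∀ t ∈ Set.Icc (τ (ρ - 1)) (τ ρ),
      Xhat t = X (ρ - 1) + ((t - τ (ρ - 1)) / (τ ρ - τ (ρ - 1))) * (X ρ - X (ρ - 1)))
    (C : ℝ → ℝ)
    (hC : ∀ lam ∈ Set.Ioc (0:ℝ) 1,
      C lam = sInf {t : ℝ | t ∈ Set.Icc 0 (τ T) ∧ lam ≤ Xhat t}) :
    ∫ lam in (0:ℝ)..1, 2 * lam * (⌈C lam / lam⌉ : ℝ)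
      ≤ 2 * (1 + ε) *
          (1 + ∑ ρ ∈ Finset.Icc 1 (T - 1), (τ ρ - τ (ρ - 1)) * (1 - X ρ)) := by
  obtain rfl : τ = geomBreakpoint ε := funext hτ
  obtain ⟨m, rfl⟩ : ∃ m, T = m + 1 := ⟨T - 1, by omega⟩
  rw [Nat.add_sub_cancel]
  have hτmono := strictMono_geomBreakpoint hε
  have hX : ∀ i < m + 1, X i ≤ X (i + 1) := fun i hi => hXmono i (i + 1) i.le_succ hi
  have hseg : ∀ i < m + 1, ∀ t ∈ Set.Icc (geomBreakpoint ε i) (geomBreakpoint ε (i + 1)),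
      Xhat t = X i + (t - geomBreakpoint ε i) / (geomBreakpoint ε (i + 1) - geomBreakpoint ε i)
        * (X (i + 1) - X i) := fun i hi t ht => by
    simpa using hXhat (i + 1) i.succ_pos hi t (by simpa using ht)
  set G := firstHit Xhat (geomBreakpoint ε (m + 1))
  have hCG : ∫ lam in (0:ℝ)..1, 2 * lam * (⌈C lam / lam⌉ : ℝ)
      = ∫ lam in (0:ℝ)..1, 2 * lam * (⌈G lam / lam⌉ : ℝ) :=
    integral_congr_ae (ae_of_all _ fun l hl => by
      rw [hC l (by rwa [Set.uIoc_of_le zero_le_one] at hl)]; rfl)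
  have hGint : IntervalIntegrable G volume (X 0) (X (m + 1)) :=
    .trans_iterate (intervalIntegrable_firstHit_piecewise hτmono le_rfl hX hseg)
  rw [hX0, hXT] at hGint
  have hstretch := integral_mul_ceil_div_le hGint fun _ _ => firstHit_nonneg
  have htrap := integral_firstHit_le_sum_trapezoid hτmono le_rfl hX hseg
  rw [hX0, hXT, ← sum_div] at htrap
  have hgeom := sum_trapezoid_geomBreakpoint_le (ε := ε) m hX0 hXT
    fun i hi => (hXrange (i + 1) (by omega)).2
  have hS : 0 ≤ ∑ ρ ∈ Icc 1 m, (geomBreakpoint ε ρ - geomBreakpoint ε (ρ - 1)) * (1 - X ρ) :=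
    sum_nonneg fun ρ hρ => mul_nonneg (sub_nonneg.2 (hτmono.monotone (Nat.sub_le ρ 1)))
      (sub_nonneg.2 (hXrange ρ (by simp at hρ; omega)).2)
  rw [hCG]
  nlinarith [mul_nonneg hε.le hS]
end
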